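/- Every draft rule φ^π is maxmin strategy-proof: for every available set X, agent i, truthful preference ≿_i, and additive utility function u_i consistent with ≿_i, reporting ≿_i maximizes over reports ≿'_i the quantity min over opponent profiles ≿'_{-i} of u_i(φ^π_i((≿'_i, ≿'_{-i}), X)). -/

import Mathlib

open Finset

noncomputable section

abbrev Obj := ℕ

def PD (r : Obj → Obj → Prop) (S T : Finset Obj) : Prop :=
  ∃ μ : {x // x ∈ T} → {x // x ∈ S}, Function.Injective μ ∧ ∀ x, r (μ x).1 x.1

def StrictPD (r : Obj → Obj → Prop) (S T : Finset Obj) : Prop :=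
  PD r S T ∧ ¬ PD r T S

def LinProfile {n : ℕ} (pref : Fin n → Obj → Obj → Prop) : Prop :=
  ∀ i, IsLinearOrder Obj (pref i)

def IsAlloc {n : ℕ} (A : Fin n → Finset Obj) (X : Finset Obj) : Prop :=
  (∀ i, A i ⊆ X) ∧ ∀ i j, i ≠ j → Disjoint (A i) (A j)

open Classical in
def topOf (r : Obj → Obj → Prop) (X : Finset Obj) : Obj :=
  if h : ∃ m ∈ X, ∀ x ∈ X, r m x then h.choose else 0

def remaining {n : ℕ} (pref : Fin n → Obj → Obj → Prop) (f : ℕ → Fin n)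
    (X : Finset Obj) : ℕ → Finset Obj
  | 0 => X
  | k + 1 => (remaining pref f X k).erase (topOf (pref (f k)) (remaining pref f X k))

def draft {n : ℕ} (pref : Fin n → Obj → Obj → Prop) (f : ℕ → Fin n)
    (X : Finset Obj) (i : Fin n) : Finset Obj :=
  ((Finset.range X.card).filter (fun k => f k = i)).image
    (fun k => topOf (pref (f k)) (remaining pref f X k))

def roundRobin {n : ℕ} (hn : 0 < n) (π : Equiv.Perm (Fin n)) (k : ℕ) : Fin n :=
  π.symm ⟨k % n, Nat.mod_lt k hn⟩

def draftPi {n : ℕ} (hn : 0 < n) (pref : Fin n → Obj → Obj → Prop)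
    (π : Equiv.Perm (Fin n)) (X : Finset Obj) (i : Fin n) : Finset Obj :=
  draft pref (roundRobin hn π) X i


/-!
Let `v₀, v₁, …` be the objects of `X` in decreasing order of `u`; this is exactly the sequence
of picks when every agent reports `≿ᵢ`. Let `T` be the set of turns of agent `i`.

Reporting truthfully guarantees `∑_{k ∈ T} u(v_k)`: at turn `k` only `k` objects are gone, so one
of `v₀, …, v_k` is still available and the truthful pick is at least as good as `v_k`.

Conversely, when all opponents report `≿ᵢ`, no report earns more. For a threshold `c`, let `g` be
the number of objects worth more than `c`, and let `K` be the last turn at which agent `i` takes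
such an object. Every opponent moving before `K` also takes one, since the object picked at `K` was
still there; counting these objects shows that agent `i` gets at most `|T ∩ [0, g)|` of them, which
is what the truthful report gets. Comparing these counts for every threshold `c` bounds the sums.
-/

theorem Finset.sum_le_sum_of_card_filter_lt_le {ι κ M : Type*} [AddCommMonoid M] [LinearOrder M]
    [IsOrderedAddMonoid M] {s : Finset ι} {t : Finset κ} {v : ι → M} {w : κ → M}
    (hst : #s = #t) (h : ∀ c, #(s.filter (c < v ·)) ≤ #(t.filter (c < w ·))) :
    ∑ a ∈ s, v a ≤ ∑ b ∈ t, w b := by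
  classical
  induction hs : #s generalizing s t with
  | zero => rw [card_eq_zero.1 hs, card_eq_zero.1 (hst.symm.trans hs), sum_empty, sum_empty]
  | succ N ih =>
    obtain ⟨a, ha, hamax⟩ := exists_max_image s v (card_pos.1 (by omega))
    obtain ⟨b, hb, hbmax⟩ := exists_max_image t w (card_pos.1 (by omega))
    have hab : v a ≤ w b := by
      by_contra! hlt
      have hc := h (w b)
      rw [filter_false_of_mem fun x hx => not_lt.2 (hbmax x hx), card_empty,
        Nat.le_zero, card_eq_zero] at hc
      exact (eq_empty_iff_forall_notMem.1 hc) a (mem_filter.2 ⟨ha, hlt⟩)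
    have hrest : ∑ x ∈ s.erase a, v x ≤ ∑ x ∈ t.erase b, w x := by
      refine ih (by rw [card_erase_of_mem ha, card_erase_of_mem hb, hst]) (fun c => ?_)
        (by rw [card_erase_of_mem ha, hs]; rfl)
      rcases lt_or_ge c (v a) with hca | hca
      · rw [filter_erase, filter_erase, card_erase_of_mem (mem_filter.2 ⟨ha, hca⟩),
          card_erase_of_mem (mem_filter.2 ⟨hb, hca.trans_le hab⟩)]
        exact Nat.sub_le_sub_right (h c) 1
      · rw [filter_false_of_mem fun x hx => not_lt.2 ((hamax x (mem_of_mem_erase hx)).trans hca),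
          card_empty]
        exact Nat.zero_le _
    rw [← add_sum_erase s v ha, ← add_sum_erase t w hb]
    exact add_le_add hab hrest

theorem exists_forall_rel_of_isLinearOrder {α : Type*} {r : α → α → Prop}
    (hr : IsLinearOrder α r) {X : Finset α} (hX : X.Nonempty) : ∃ m ∈ X, ∀ x ∈ X, r m x := by
  classical
  obtain ⟨m, l, hml⟩ := List.exists_cons_of_ne_nil (l := X.sort r)
    (List.ne_nil_of_length_pos (by rw [length_sort]; exact hX.card_pos))
  have hsorted := pairwise_sort X r
  rw [hml, List.pairwise_cons] at hsorted
  refine ⟨m, (mem_sort r).1 (hml ▸ List.mem_cons_self), fun x hx => ?_⟩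
  rcases List.mem_cons.1 (hml ▸ (mem_sort r).2 hx) with rfl | hx
  · exact refl_of r x
  · exact hsorted.1 x hx

theorem topOf_spec {s : Obj → Obj → Prop} (hs : IsLinearOrder Obj s) {X : Finset Obj}
    (hX : X.Nonempty) : topOf s X ∈ X ∧ ∀ x ∈ X, s (topOf s X) x := by
  have h := exists_forall_rel_of_isLinearOrder hs hX
  rw [topOf, dif_pos h]
  exact h.choose_spec

theorem LinProfile.update {n : ℕ} {p : Fin n → Obj → Obj → Prop} (hp : LinProfile p) (i : Fin n)
    {s : Obj → Obj → Prop} (hs : IsLinearOrder Obj s) : LinProfile (Function.update p i s) := by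
  intro j
  rcases eq_or_ne j i with rfl | hji
  · rwa [Function.update_self]
  · rw [Function.update_of_ne hji]
    exact hp j

section Picks

variable {n : ℕ} {p : Fin n → Obj → Obj → Prop} {f : ℕ → Fin n} {X : Finset Obj} {j k : ℕ}

def pick (p : Fin n → Obj → Obj → Prop) (f : ℕ → Fin n) (X : Finset Obj) (k : ℕ) : Obj :=
  topOf (p (f k)) (remaining p f X k)

theorem remaining_succ :
    remaining p f X (k + 1) = (remaining p f X k).erase (pick p f X k) := rfl

theorem remaining_antitone : Antitone (remaining p f X) :=
  antitone_nat_of_succ_le fun _ => erase_subset _ _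

theorem remaining_subset (k : ℕ) : remaining p f X k ⊆ X :=
  remaining_antitone (Nat.zero_le k)

theorem card_remaining (hp : LinProfile p) (k : ℕ) : #(remaining p f X k) = #X - k := by
  induction k with
  | zero => rfl
  | succ k ih =>
    rcases (remaining p f X k).eq_empty_or_nonempty with h | h
    · rw [remaining_succ, h, erase_empty, card_empty]
      rw [h, card_empty] at ih
      omega
    · have hpick : pick p f X k ∈ remaining p f X k := (topOf_spec (hp (f k)) h).1
      rw [remaining_succ, card_erase_of_mem hpick, ih]
      omega

theorem pick_spec (hp : LinProfile p) (hk : k < #X) :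
    pick p f X k ∈ remaining p f X k ∧ ∀ x ∈ remaining p f X k, p (f k) (pick p f X k) x :=
  topOf_spec (hp _) (card_pos.1 (by rw [card_remaining hp]; omega))

theorem pick_mem (hp : LinProfile p) (hk : k < #X) : pick p f X k ∈ X :=
  remaining_subset k (pick_spec hp hk).1

theorem pick_rel_pick (hp : LinProfile p) (hjk : j ≤ k) (hk : k < #X) :
    p (f j) (pick p f X j) (pick p f X k) :=
  (pick_spec hp (hjk.trans_lt hk)).2 _ (remaining_antitone hjk (pick_spec hp hk).1)

theorem pick_ne_pick (hp : LinProfile p) (hjk : j < k) (hk : k < #X) :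
    pick p f X k ≠ pick p f X j :=
  ne_of_mem_erase (remaining_antitone (Nat.succ_le_of_lt hjk) (pick_spec hp hk).1)

theorem injOn_pick (hp : LinProfile p) : Set.InjOn (pick p f X) (range #X) := by
  intro a ha b hb hab
  rw [coe_range, Set.mem_Iio] at ha hb
  by_contra hne
  rcases Nat.lt_or_gt_of_ne hne with h | h
  · exact pick_ne_pick hp h hb hab.symm
  · exact pick_ne_pick hp h ha hab

theorem image_pick_range (hp : LinProfile p) : (range #X).image (pick p f X) = X :=
  eq_of_subset_of_card_le (image_subset_iff.2 fun _ hk => pick_mem hp (mem_range.1 hk))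
    (by rw [card_image_of_injOn (injOn_pick hp), card_range])

theorem sum_draft_eq_sum_pick {M : Type*} [AddCommMonoid M] (hp : LinProfile p) (i : Fin n)
    (u : Obj → M) :
    ∑ x ∈ draft p f X i, u x = ∑ k ∈ (range #X).filter (f · = i), u (pick p f X k) :=
  sum_image fun _ ha _ hb => injOn_pick hp (mem_filter.1 ha).1 (mem_filter.1 hb).1

end Picks

section Clones

variable {n : ℕ} {r : Obj → Obj → Prop} {p : Fin n → Obj → Obj → Prop} {f : ℕ → Fin n}
  {X : Finset Obj} {i : Fin n} {k : ℕ}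

theorem rel_pick_clone (hr : IsLinearOrder Obj r) (hp : LinProfile p) (hk : k < #X)
    (hfk : p (f k) = r) :
    r (pick p f X k) (pick (fun _ => r) f X k) := by
  have hclone : LinProfile (fun _ : Fin n => r) := fun _ => hr
  have hcard : #((range (k + 1)).image (pick (fun _ => r) f X)) = k + 1 := by
    rw [card_image_of_injOn ((injOn_pick hclone).mono (by simpa using hk)), card_range]
  -- only `k` objects are gone at turn `k`, so some earlier clone pick is still available
  obtain ⟨x, hx⟩ := inter_nonempty_of_card_lt_card_add_card
    (remaining_subset (p := p) (f := f) k)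
    (image_subset_iff.2 fun j hj => pick_mem hclone ((mem_range.1 hj).trans_le hk))
    (by rw [card_remaining hp, hcard]; omega)
  obtain ⟨hxp, hxc⟩ := mem_inter.1 hx
  obtain ⟨j, hj, rfl⟩ := mem_image.1 hxc
  have hpick := (pick_spec hp hk).2 _ hxp
  rw [hfk] at hpick
  exact _root_.trans hpick (pick_rel_pick hclone (Nat.lt_succ_iff.1 (mem_range.1 hj)) hk)

theorem pred_pick_clone_iff (hr : IsLinearOrder Obj r) {G : Obj → Prop} [DecidablePred G]
    (hG : ∀ x y, r x y → G y → G x) (hk : k < #X) :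
    G (pick (fun _ => r) f X k) ↔ k < #(X.filter G) := by
  have hclone : LinProfile (fun _ : Fin n => r) := fun _ => hr
  constructor
  · intro hGk
    have hmaps : Set.MapsTo (pick (fun _ => r) f X) (range (k + 1)) (X.filter G) := by
      intro j hj
      have hjk := Nat.lt_succ_iff.1 (mem_range.1 hj)
      exact mem_filter.2
        ⟨pick_mem hclone (hjk.trans_lt hk), hG _ _ (pick_rel_pick hclone hjk hk) hGk⟩
    simpa using card_le_card_of_injOn _ hmaps ((injOn_pick hclone).mono (by simpa using hk))
  · intro hkg
    by_contra hGk
    have hsub : X.filter G ⊆ (range k).image (pick (fun _ => r) f X) := by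
      intro x hx
      obtain ⟨hxX, hGx⟩ := mem_filter.1 hx
      rw [← image_pick_range (f := f) (X := X) hclone] at hxX
      obtain ⟨j, hj, rfl⟩ := mem_image.1 hxX
      refine mem_image_of_mem _ (mem_range.2 (lt_of_not_ge fun hkj => hGk ?_))
      exact hG _ _ (pick_rel_pick hclone hkj (mem_range.1 hj)) hGx
    have := (card_le_card hsub).trans card_image_le
    rw [card_range] at this
    omega

theorem card_filter_pred_pick_le {q : Fin n → Obj → Obj → Prop} (hq : LinProfile q)
    (hopp : ∀ j, j ≠ i → q j = r) {G : Obj → Prop} [DecidablePred G]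
    (hG : ∀ x y, r x y → G y → G x) :
    #(((range #X).filter (f · = i)).filter (fun k => G (pick q f X k))) ≤
      #((range #(X.filter G)).filter (f · = i)) := by
  set GP := ((range #X).filter (f · = i)).filter (fun k => G (pick q f X k))
  rcases GP.eq_empty_or_nonempty with hGP | hGP
  · rw [hGP, card_empty]
    exact Nat.zero_le _
  have hmem : ∀ {j}, j ∈ GP ↔ (j < #X ∧ f j = i) ∧ G (pick q f X j) := by
    simp only [GP, mem_filter, mem_range, implies_true]
  set K := GP.max' hGP
  obtain ⟨⟨hKX, -⟩, hGK⟩ := hmem.1 (GP.max'_mem hGP)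
  set O := (range K).filter (fun j => ¬ f j = i)
  -- the object picked at `K` was still available to every opponent moving before `K`
  have hgood : Set.MapsTo (pick q f X) (O ∪ GP : Finset ℕ) (X.filter G) := by
    intro j hj
    rcases mem_union.1 hj with hjO | hjGP
    · obtain ⟨hjK, hji⟩ := mem_filter.1 hjO
      have hrel := pick_rel_pick (f := f) hq (le_of_lt (mem_range.1 hjK)) hKX
      rw [hopp _ hji] at hrel
      exact mem_filter.2 ⟨pick_mem hq ((mem_range.1 hjK).trans hKX), hG _ _ hrel hGK⟩
    · obtain ⟨⟨hjX, -⟩, hGj⟩ := hmem.1 hjGP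
      exact mem_filter.2 ⟨pick_mem hq hjX, hGj⟩
  have hsub : O ∪ GP ⊆ range #X := union_subset
    (fun j hj => mem_range.2 ((mem_range.1 (mem_filter.1 hj).1).trans hKX))
    (fun j hj => mem_range.2 (hmem.1 hj).1.1)
  have hcount : #O + #GP ≤ #(X.filter G) := by
    have hdisj : Disjoint O GP :=
      disjoint_left.2 fun j hjO hjGP => (mem_filter.1 hjO).2 (hmem.1 hjGP).1.2
    rw [← card_union_of_disjoint hdisj]
    exact card_le_card_of_injOn _ hgood ((injOn_pick hq).mono (by exact_mod_cast hsub))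
  rcases lt_or_ge K #(X.filter G) with hKg | hgK
  · exact card_le_card fun j hj =>
      mem_filter.2 ⟨mem_range.2 ((GP.le_max' j hj).trans_lt hKg), (hmem.1 hj).1.2⟩
  · have hsplit := card_filter_add_card_filter_not (s := range #(X.filter G)) (f · = i)
    have hO : #((range #(X.filter G)).filter (fun j => ¬ f j = i)) ≤ #O :=
      card_le_card (filter_subset_filter _ (range_subset_range.2 hgK))
    rw [card_range] at hsplit
    omega

theorem sum_pick_clone_le {M : Type*} [AddCommMonoid M] [PartialOrder M] [IsOrderedAddMonoid M]
    (hr : IsLinearOrder Obj r) (hp : LinProfile p) (hpi : p i = r) {u : Obj → M}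
    (hu : ∀ x y, r x y → u y ≤ u x) :
    ∑ k ∈ (range #X).filter (f · = i), u (pick (fun _ => r) f X k) ≤
      ∑ k ∈ (range #X).filter (f · = i), u (pick p f X k) := by
  refine sum_le_sum fun k hk => hu _ _ (rel_pick_clone hr hp (mem_range.1 (mem_filter.1 hk).1) ?_)
  rw [(mem_filter.1 hk).2, hpi]

theorem sum_pick_le_sum_pick_clone {M : Type*} [AddCommMonoid M] [LinearOrder M]
    [IsOrderedAddMonoid M] (hr : IsLinearOrder Obj r) {q : Fin n → Obj → Obj → Prop}
    (hq : LinProfile q) (hopp : ∀ j, j ≠ i → q j = r) {u : Obj → M}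
    (hu : ∀ x y, r x y → u y ≤ u x) :
    ∑ k ∈ (range #X).filter (f · = i), u (pick q f X k) ≤
      ∑ k ∈ (range #X).filter (f · = i), u (pick (fun _ => r) f X k) := by
  refine sum_le_sum_of_card_filter_lt_le rfl fun c => ?_
  have hG : ∀ x y, r x y → c < u y → c < u x := fun x y hxy hy => hy.trans_le (hu x y hxy)
  have hclone : ((range #X).filter (f · = i)).filter (fun k => c < u (pick (fun _ => r) f X k)) =
      (range #(X.filter (c < u ·))).filter (f · = i) := by
    ext k
    simp only [mem_filter, mem_range]
    constructor
    · rintro ⟨⟨hk, hfk⟩, hc⟩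
      exact ⟨(pred_pick_clone_iff hr hG hk).1 hc, hfk⟩
    · rintro ⟨hkg, hfk⟩
      have hk := hkg.trans_le (card_filter_le _ _)
      exact ⟨⟨hk, hfk⟩, (pred_pick_clone_iff hr hG hk).2 hkg⟩
  rw [hclone]
  exact card_filter_pred_pick_le hq hopp hG

end Clones

theorem draft_maxmin_strategyproof_general {n : ℕ} (hn : 0 < n) (π : Equiv.Perm (Fin n))
    (X : Finset Obj) (i : Fin n)
    (r : Obj → Obj → Prop) (hr : IsLinearOrder Obj r)
    (u : Obj → ℝ) (hupos : ∀ x, 0 < u x)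
    (humono : ∀ x y : Obj, r x y ↔ u y ≤ u x) :
    ∀ r' : Obj → Obj → Prop, IsLinearOrder Obj r' →
      sInf {v : ℝ | ∃ p : Fin n → Obj → Obj → Prop, LinProfile p ∧
          v = ∑ x ∈ draftPi hn (Function.update p i r') π X i, u x} ≤
      sInf {v : ℝ | ∃ p : Fin n → Obj → Obj → Prop, LinProfile p ∧
          v = ∑ x ∈ draftPi hn (Function.update p i r) π X i, u x} := by
  intro r' hr'
  have hclone : LinProfile (fun _ : Fin n => r) := fun _ => hr
  have hmono : ∀ x y, r x y → u y ≤ u x := fun x y => (humono x y).1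
  -- the misreport is evaluated against opponents who all report `r`
  refine le_trans (csInf_le ?_
    (?_ : ∑ x ∈ draftPi hn (Function.update (fun _ => r) i r') π X i, u x ∈ _)) (le_csInf ?_ ?_)
  · refine ⟨0, ?_⟩
    rintro _ ⟨p, -, rfl⟩
    exact sum_nonneg fun x _ => (hupos x).le
  · exact ⟨fun _ => r, hclone, rfl⟩
  · exact ⟨_, fun _ => r, hclone, rfl⟩
  · rintro _ ⟨p, hp, rfl⟩
    rw [draftPi, draftPi, sum_draft_eq_sum_pick (hclone.update i hr'),
      sum_draft_eq_sum_pick (hp.update i hr)]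
    exact (sum_pick_le_sum_pick_clone hr (hclone.update i hr')
      (fun j hj => Function.update_of_ne hj _ _) hmono).trans
      (sum_pick_clone_le hr (hp.update i hr) (Function.update_self _ _ _) hmono)

theorem draft_maxmin_strategyproof {n : ℕ} (hn : 0 < n) (π : Equiv.Perm (Fin n))
    (X : Finset Obj) (hX : X.Nonempty) (i : Fin n)
    (r : Obj → Obj → Prop) (hr : IsLinearOrder Obj r)
    (u : Obj → ℝ) (hupos : ∀ x, 0 < u x)
    (humono : ∀ x y : Obj, r x y ↔ u y ≤ u x) :
    ∀ r' : Obj → Obj → Prop, IsLinearOrder Obj r' →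
      sInf {v : ℝ | ∃ p : Fin n → Obj → Obj → Prop, LinProfile p ∧
          v = ∑ x ∈ draftPi hn (Function.update p i r') π X i, u x} ≤
      sInf {v : ℝ | ∃ p : Fin n → Obj → Obj → Prop, LinProfile p ∧
          v = ∑ x ∈ draftPi hn (Function.update p i r) π X i, u x} :=
  draft_maxmin_strategyproof_general hn π X i r hr u hupos humono
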